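/- For all propositional formulas φ, ψ in the language with ∧, ∨, ¬, the following are equivalent: (1) φ ⊢_C ψ (ψ is a classical consequence of φ, i.e., every Boolean valuation making φ true makes ψ true); (2) ⋁_{δ ∈ sd(P)} (δ ∧ φ) ⊢_F ψ, where P = Prop(φ) ∪ Prop(ψ) is the set of propositional variables occurring in φ or ψ, sd(P) is the set of state descriptions over P, and the disjunction is taken over all δ ∈ sd(P) (associated in some fixed way). -/

import Mathlib

/-- Propositional formulas in `∧`, `∨`, `¬` over countably many variables. -/
inductive Fml : Type
  | var : ℕ → Fml
  | and : Fml → Fml → Fml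
  | or : Fml → Fml → Fml
  | neg : Fml → Fml
deriving DecidableEq

/-- Fundamental logic: the smallest intro-elim logic. -/
inductive FDer : Fml → Fml → Prop
  | refl (φ : Fml) : FDer φ φ
  | andE1 (φ ψ : Fml) : FDer (.and φ ψ) φ
  | andE2 (φ ψ : Fml) : FDer (.and φ ψ) ψ
  | orI1 (φ ψ : Fml) : FDer φ (.or φ ψ)
  | orI2 (φ ψ : Fml) : FDer φ (.or ψ φ)
  | dni (φ : Fml) : FDer φ (.neg (.neg φ))
  | exf (φ ψ : Fml) : FDer (.and φ (.neg φ)) ψ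
  | trans {φ ψ χ : Fml} : FDer φ ψ → FDer ψ χ → FDer φ χ
  | andI {φ ψ χ : Fml} : FDer φ ψ → FDer φ χ → FDer φ (.and ψ χ)
  | orE {φ ψ χ : Fml} : FDer φ χ → FDer ψ χ → FDer (.or φ ψ) χ
  | contra {φ ψ : Fml} : FDer φ ψ → FDer (.neg ψ) (.neg φ)

/-- Classical Boolean evaluation of a formula under a valuation. -/
def evalF (π : ℕ → Bool) : Fml → Bool
  | .var p => π p
  | .and φ ψ => evalF π φ && evalF π ψ
  | .or φ ψ => evalF π φ || evalF π ψ
  | .neg φ => ! evalF π φ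

/-- The set of propositional variables occurring in a formula. -/
def varsF : Fml → Finset ℕ
  | .var p => {p}
  | .and φ ψ => varsF φ ∪ varsF ψ
  | .or φ ψ => varsF φ ∪ varsF ψ
  | .neg φ => varsF φ

/-- The literal `p` or `¬p`, according to the sign `s p`. -/
def lit (s : ℕ → Bool) (p : ℕ) : Fml :=
  if s p then .var p else .neg (.var p)

/-- The state description `±p₁ ∧ ⋯ ∧ ±pₙ` over a list of variables, with signs
given by `s` (left associated; junk value for the empty list, which is not used). -/
def sdFml (s : ℕ → Bool) : List ℕ → Fml
  | [] => .var 0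
  | p :: rest => rest.foldl (fun acc q => .and acc (lit s q)) (lit s p)

/-- All sign assignments on a given list of variables. -/
def allSigns : List ℕ → List (ℕ → Bool)
  | [] => [fun _ => false]
  | p :: rest =>
      (allSigns rest).flatMap fun s => [Function.update s p false, Function.update s p true]

/-- Left-associated disjunction of a list of formulas (junk value for the empty list,
which is not used). -/
def disjFml : List Fml → Fml
  | [] => .var 0
  | f :: rest => rest.foldl .or f

/-- The disjunction `⋁_{δ ∈ sd(P)} (δ ∧ φ)` where `P = Prop(φ) ∪ Prop(ψ)`. -/
def sdDisj (φ ψ : Fml) : Fml :=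
  disjFml
    (((allSigns ((varsF φ ∪ varsF ψ).sort (· ≤ ·))).map
      fun s => Fml.and (sdFml s ((varsF φ ∪ varsF ψ).sort (· ≤ ·))) φ))

/-
Soundness of the rules gives (2) ⇒ (1): a valuation satisfying `φ` satisfies the disjunct whose
state description agrees with it on `P`. For (1) ⇒ (2) it suffices to derive `ψ` from each
disjunct `δ ∧ φ`. A state description `δ` derives, for every formula `χ` over `P`, either `χ` or
`¬χ` according to the truth value of `χ` under the signs of `δ`; no double negation elimination
is needed, only `dni` and the De Morgan law `¬a ∧ ¬b ⊢ ¬(a ∨ b)`. So `δ ⊢ ψ` when the signs of `δ`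
make `φ` true, and `δ ∧ φ ⊢ φ ∧ ¬φ ⊢ ψ` otherwise.
-/

-- Extends `lit` to all formulas: `lit s p = signedF s (.var p)` holds by `rfl`.
def signedF (s : ℕ → Bool) (χ : Fml) : Fml :=
  if evalF s χ then χ else .neg χ

namespace FDer

theorem sound {α β : Fml} (h : FDer α β) (π : ℕ → Bool) :
    evalF π α = true → evalF π β = true := by
  induction h with
  | orE _ _ ih₁ ih₂ =>
    intro hα
    simp only [evalF, Bool.or_eq_true] at hα
    exact hα.elim ih₁ ih₂
  | contra _ ih => simpa only [evalF, Bool.not_eq_true', Bool.not_eq_true] using mt ih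
  | _ => simp_all [evalF]

theorem neg_or_of_and_neg (a b : Fml) : FDer (.and (.neg a) (.neg b)) (.neg (.or a b)) :=
  (dni _).trans <| contra <|
    orE ((dni a).trans (contra (andE1 _ _))) ((dni b).trans (contra (andE2 _ _)))

theorem foldl_or_left {a χ : Fml} {L : List Fml} (ha : FDer a χ) (hL : ∀ f ∈ L, FDer f χ) :
    FDer (L.foldl .or a) χ := by
  induction L generalizing a with
  | nil => exact ha
  | cons f rest ih => exact ih (orE ha (hL f (by simp))) fun g hg => hL g (by simp [hg])

theorem disjFml_left {χ : Fml} {L : List Fml} (hne : L ≠ []) (hL : ∀ f ∈ L, FDer f χ) :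
    FDer (disjFml L) χ := by
  cases L with
  | nil => exact absurd rfl hne
  | cons f rest => exact foldl_or_left (hL f (by simp)) fun g hg => hL g (by simp [hg])

theorem foldl_and_lit (s : ℕ → Bool) (L : List ℕ) (a : Fml) :
    FDer (L.foldl (fun acc q => .and acc (lit s q)) a) a ∧
      ∀ p ∈ L, FDer (L.foldl (fun acc q => .and acc (lit s q)) a) (lit s p) := by
  induction L generalizing a with
  | nil => exact ⟨refl a, by simp⟩
  | cons q rest ih =>
    obtain ⟨ha, hlits⟩ := ih (.and a (lit s q))
    refine ⟨ha.trans (andE1 _ _), fun p hp => ?_⟩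
    rcases List.mem_cons.mp hp with rfl | hp
    · exact ha.trans (andE2 _ _)
    · exact hlits p hp

theorem sdFml_lit (s : ℕ → Bool) {p : ℕ} {L : List ℕ} (hp : p ∈ L) :
    FDer (sdFml s L) (lit s p) := by
  cases L with
  | nil => simp at hp
  | cons q rest =>
    rcases List.mem_cons.mp hp with rfl | hp
    · exact (foldl_and_lit s rest _).1
    · exact (foldl_and_lit s rest _).2 p hp

theorem signedF_of_lit (s : ℕ → Bool) {δ χ : Fml} (h : ∀ p ∈ varsF χ, FDer δ (lit s p)) :
    FDer δ (signedF s χ) := by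
  induction χ with
  | var p => exact h p (by simp [varsF])
  | and χ₁ χ₂ ih₁ ih₂ =>
    have h₁ := ih₁ fun p hp => h p (by simp [varsF, hp])
    have h₂ := ih₂ fun p hp => h p (by simp [varsF, hp])
    unfold signedF at h₁ h₂ ⊢
    cases e₁ : evalF s χ₁ <;> cases e₂ : evalF s χ₂ <;> simp only [e₁, e₂, evalF] at h₁ h₂ ⊢
    · exact h₁.trans (contra (andE1 _ _))
    · exact h₁.trans (contra (andE1 _ _))
    · exact h₂.trans (contra (andE2 _ _))
    · exact andI h₁ h₂
  | or χ₁ χ₂ ih₁ ih₂ =>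
    have h₁ := ih₁ fun p hp => h p (by simp [varsF, hp])
    have h₂ := ih₂ fun p hp => h p (by simp [varsF, hp])
    unfold signedF at h₁ h₂ ⊢
    cases e₁ : evalF s χ₁ <;> cases e₂ : evalF s χ₂ <;> simp only [e₁, e₂, evalF] at h₁ h₂ ⊢
    · exact (andI h₁ h₂).trans (neg_or_of_and_neg _ _)
    · exact h₂.trans (orI2 _ _)
    · exact h₁.trans (orI1 _ _)
    · exact h₁.trans (orI1 _ _)
  | neg χ₀ ih =>
    have h₀ := ih fun p hp => h p (by simpa [varsF] using hp)
    unfold signedF at h₀ ⊢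
    cases e₀ : evalF s χ₀ <;> simp only [e₀, evalF] at h₀ ⊢
    · exact h₀
    · exact h₀.trans (dni _)

theorem and_left_of_consequence (s : ℕ → Bool) {δ φ ψ : Fml}
    (hφ : ∀ p ∈ varsF φ, FDer δ (lit s p)) (hψ : ∀ p ∈ varsF ψ, FDer δ (lit s p))
    (h : ∀ π : ℕ → Bool, evalF π φ = true → evalF π ψ = true) :
    FDer (.and δ φ) ψ := by
  have hφ' := signedF_of_lit s hφ
  have hψ' := signedF_of_lit s hψ
  unfold signedF at hφ' hψ'
  cases e : evalF s φ
  · simp only [e] at hφ'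
    exact (andI (andE2 _ _) ((andE1 _ _).trans hφ')).trans (exf _ _)
  · simp only [h s e] at hψ'
    exact (andE1 _ _).trans hψ'

end FDer

theorem evalF_lit_of_eq {π s : ℕ → Bool} {p : ℕ} (h : s p = π p) : evalF π (lit s p) = true := by
  unfold lit
  cases hs : s p <;> simp_all [evalF]

theorem evalF_foldl_and_lit (π s : ℕ → Bool) (L : List ℕ) (a : Fml) :
    evalF π (L.foldl (fun acc q => .and acc (lit s q)) a) = true ↔
      evalF π a = true ∧ ∀ q ∈ L, evalF π (lit s q) = true := by
  induction L generalizing a with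
  | nil => simp
  | cons q rest ih => simp [ih, evalF, and_assoc]

theorem evalF_sdFml {π s : ℕ → Bool} {L : List ℕ} (hne : L ≠ []) (hs : ∀ p ∈ L, s p = π p) :
    evalF π (sdFml s L) = true := by
  cases L with
  | nil => exact absurd rfl hne
  | cons p rest =>
    exact (evalF_foldl_and_lit π s rest _).2
      ⟨evalF_lit_of_eq (hs p (by simp)), fun q hq => evalF_lit_of_eq (hs q (by simp [hq]))⟩

theorem evalF_foldl_or (π : ℕ → Bool) (L : List Fml) (a : Fml) :
    evalF π (L.foldl .or a) = (evalF π a || L.any (evalF π)) := by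
  induction L generalizing a with
  | nil => simp
  | cons f rest ih => simp [ih, evalF, Bool.or_assoc]

theorem evalF_disjFml_of_mem {π : ℕ → Bool} {f : Fml} {L : List Fml} (hf : f ∈ L)
    (h : evalF π f = true) : evalF π (disjFml L) = true := by
  obtain ⟨g, rest, rfl⟩ := List.exists_cons_of_ne_nil (List.ne_nil_of_mem hf)
  rw [disjFml, evalF_foldl_or]
  rcases List.mem_cons.mp hf with rfl | hf
  · simp [h]
  · simpa using Or.inr ⟨f, hf, h⟩

theorem exists_mem_allSigns_eqOn (π : ℕ → Bool) (L : List ℕ) :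
    ∃ s ∈ allSigns L, ∀ p ∈ L, s p = π p := by
  induction L with
  | nil => exact ⟨fun _ => false, by simp [allSigns], by simp⟩
  | cons p rest ih =>
    obtain ⟨s, hs, hsπ⟩ := ih
    refine ⟨Function.update s p (π p), ?_, fun q hq => ?_⟩
    · simp only [allSigns, List.mem_flatMap]
      exact ⟨s, hs, by cases π p <;> simp⟩
    · by_cases hqp : q = p
      · simp [hqp]
      · rw [Function.update_of_ne hqp]
        exact hsπ q (by simpa [hqp] using hq)

theorem allSigns_ne_nil (L : List ℕ) : allSigns L ≠ [] :=
  let ⟨_, hs, _⟩ := exists_mem_allSigns_eqOn (fun _ => false) L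
  List.ne_nil_of_mem hs

theorem varsF_nonempty (χ : Fml) : (varsF χ).Nonempty := by
  induction χ with
  | var p => exact ⟨p, by simp [varsF]⟩
  | and _ _ ih _ | or _ _ ih _ => exact ih.mono (by simp [varsF])
  | neg _ ih => exact ih

theorem stmt_19 (φ ψ : Fml) :
    (∀ π : ℕ → Bool, evalF π φ = true → evalF π ψ = true) ↔ FDer (sdDisj φ ψ) ψ := by
  unfold sdDisj
  set L := (varsF φ ∪ varsF ψ).sort (· ≤ ·)
  have hφL : ∀ p ∈ varsF φ, p ∈ L := fun p hp => by simp [L, hp]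
  have hψL : ∀ p ∈ varsF ψ, p ∈ L := fun p hp => by simp [L, hp]
  constructor
  · intro h
    refine FDer.disjFml_left (by simpa using allSigns_ne_nil L) (List.forall_mem_map.2 ?_)
    exact fun s _ => FDer.and_left_of_consequence s (fun p hp => FDer.sdFml_lit s (hφL p hp))
      (fun p hp => FDer.sdFml_lit s (hψL p hp)) h
  · intro h π hπ
    obtain ⟨s, hs, hsπ⟩ := exists_mem_allSigns_eqOn π L
    have hL : L ≠ [] :=
      let ⟨p, hp⟩ := varsF_nonempty φ
      List.ne_nil_of_mem (hφL p hp)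
    refine h.sound π (evalF_disjFml_of_mem (List.mem_map_of_mem hs) ?_)
    simp [evalF, evalF_sdFml hL hsπ, hπ]
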